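/- arXiv:1705.09131 — 4 statements merged into one kernel-verified Lean document; each statement's English description precedes it below -/
import Mathlib

section
/- The image of the continuous homomorphism from the additive group of p-adic integers Z_p to the unit group of (Z/p)[[x]] sending 1 to 1-x (i.e., α maps to (1-x)^α) is a compact subset of (Z/p)[[x]] of cardinality at most that of Z_p, and its image in (Z/p)[x]/(x^(p^i)) has exactly p^i elements. -/
/-!
Write `f α = τ (ofAdd α)`. Every `f α` has constant coefficient `1`, since a homomorphism from
`ℤ_p` to `(ℤ/p)ˣ` is trivial (`p - 1` is invertible in `ℤ_p`). Hence in characteristic `p`,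
`f α ^ pⁱ - 1 = (f α - 1) ^ pⁱ` vanishes modulo `x^(pⁱ)`, so modulo `x^(pⁱ)` the map `f` only
depends on `α` modulo `pⁱ` and its image is the cyclic monoid generated by `1 - x`. Since
`(1 - x) ^ pʲ = 1 - x ^ pʲ`, this generator has order exactly `pⁱ`.
-/

/-- The `x`-adic topology on `(ℤ/p)[[x]]`: the topology of coefficientwise convergence,
induced from the product of discrete topologies via the coefficient functions. -/
noncomputable def psTop (p : ℕ) : TopologicalSpace (PowerSeries (ZMod p)) :=
  TopologicalSpace.induced (fun f n => PowerSeries.coeff (R := ZMod p) n f)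
    (@Pi.topologicalSpace ℕ (fun _ => ZMod p) (fun _ => ⊥))

open PowerSeries Multiplicative

namespace PowerSeries

variable {R : Type*} [CommRing R]

theorem mk_one_sub_X_pow_eq_one_iff [Nontrivial R] {m n : ℕ} :
    Ideal.Quotient.mk (Ideal.span {X ^ m}) (1 - X ^ n : R⟦X⟧) = 1 ↔ m ≤ n := by
  rw [← map_one (Ideal.Quotient.mk _), Ideal.Quotient.eq, Ideal.mem_span_singleton,
    sub_sub_cancel_left, dvd_neg, X_pow_dvd_iff]
  simp only [coeff_X_pow, ite_eq_right_iff, one_ne_zero, imp_false]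
  exact ⟨fun h => not_lt.1 fun hnm => h n hnm rfl, fun h k hk hkn => by omega⟩

variable (p : ℕ) [CharP R p]

instance : CharP R⟦X⟧ p := charP_of_injective_ringHom C_injective p

variable [Fact p.Prime]

theorem one_sub_X_pow_char_pow (n : ℕ) : (1 - X : R⟦X⟧) ^ p ^ n = 1 - X ^ p ^ n := by
  rw [sub_pow_char_pow, one_pow]

theorem mk_pow_char_pow_eq_one {a : R⟦X⟧} (ha : constantCoeff a = 1) (n : ℕ) :
    Ideal.Quotient.mk (Ideal.span {X ^ p ^ n}) (a ^ p ^ n) = 1 := by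
  rw [← map_one (Ideal.Quotient.mk _), Ideal.Quotient.eq, Ideal.mem_span_singleton,
    ← one_pow (p ^ n), ← sub_pow_char_pow]
  exact pow_dvd_pow_of_dvd (X_dvd_iff.2 (by simp [ha])) _

theorem orderOf_mk_one_sub_X (i : ℕ) :
    orderOf (Ideal.Quotient.mk (Ideal.span {X ^ p ^ i}) (1 - X : R⟦X⟧)) = p ^ i := by
  have : Nontrivial R := CharP.nontrivial_of_char_ne_one (Fact.out : p.Prime).ne_one
  have hpow (k : ℕ) : (Ideal.Quotient.mk (Ideal.span {X ^ p ^ i}) (1 - X : R⟦X⟧)) ^ p ^ k = 1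
      ↔ i ≤ k := by
    rw [← map_pow, one_sub_X_pow_char_pow, mk_one_sub_X_pow_eq_one_iff,
      Nat.pow_le_pow_iff_right (Fact.out : p.Prime).one_lt]
  cases i with
  | zero =>
    exact orderOf_eq_one_iff.2 (by simpa only [pow_zero, pow_one] using (hpow 0).2 le_rfl)
  | succ n => exact orderOf_eq_prime_pow (mt (hpow n).1 (by omega)) ((hpow _).2 le_rfl)

end PowerSeries

namespace PadicInt

variable {p : ℕ} [Fact p.Prime]

theorem monoidHom_zmod_units_eq_one (φ : Multiplicative ℤ_[p] →* (ZMod p)ˣ) (α : ℤ_[p]) :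
    φ (ofAdd α) = 1 := by
  obtain ⟨u, hu⟩ : IsUnit ((p - 1 : ℕ) : ℤ_[p]) :=
    isUnit_iff.2 <| norm_natCast_eq_one_iff.2 <|
      (Nat.coprime_self_sub_right (Fact.out : p.Prime).one_le).2 (Nat.coprime_one_right p)
  have hα : α = (p - 1) • (↑u⁻¹ * α) := by
    rw [nsmul_eq_mul, ← hu, ← mul_assoc, Units.mul_inv, one_mul]
  rw [hα, ofAdd_nsmul, map_pow, ZMod.units_pow_card_sub_one_eq_one]

theorem range_monoidHom_eq_powers {M : Type*} [Monoid M] (φ : Multiplicative ℤ_[p] →* M)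
    {i : ℕ} (h : ∀ α, φ (ofAdd α) ^ p ^ i = 1) :
    Set.range (fun α => φ (ofAdd α)) = Submonoid.powers (φ (ofAdd 1)) := by
  ext y
  constructor
  · rintro ⟨α, rfl⟩
    obtain ⟨β, hβ⟩ := Ideal.mem_span_singleton'.1 (α.appr_spec i)
    have hα : α = α.appr i • 1 + p ^ i • β := by
      rw [nsmul_one, nsmul_eq_mul, Nat.cast_pow]
      linear_combination -hβ
    refine ⟨α.appr i, ?_⟩
    dsimp only
    conv_rhs => rw [hα]
    rw [ofAdd_add, ofAdd_nsmul, ofAdd_nsmul, map_mul, map_pow, map_pow, h, mul_one]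
  · rintro ⟨n, rfl⟩
    exact ⟨n, by dsimp only; rw [← map_pow, ← ofAdd_nsmul, nsmul_one]⟩

end PadicInt

theorem Nat.card_powers_of_isOfFinOrder {M : Type*} [Monoid M] {x : M} (hx : IsOfFinOrder x) :
    Nat.card (Submonoid.powers x) = orderOf x :=
  (Nat.card_congr (finEquivPowers hx).symm).trans (Nat.card_fin _)

/-- Let `τ` be the continuous homomorphism `ℤ_p → ((ℤ/p)[[x]])ˣ` with `τ(1) = 1 - x`
(i.e. `α ↦ (1-x)^α`; we quantify over multiplicative, continuous `τ` with `τ(1) = 1-x`).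
Its image is a compact subset of `(ℤ/p)[[x]]` of cardinality at most that of `ℤ_p`, and its
image in `(ℤ/p)[x]/(x^(pⁱ))` has exactly `pⁱ` elements. -/
theorem stmt2 (p : ℕ) [Fact p.Prime]
    (τ : Multiplicative ℤ_[p] →* PowerSeries (ZMod p))
    (hτ1 : τ (Multiplicative.ofAdd (1 : ℤ_[p])) = 1 - PowerSeries.X)
    (hτc : @Continuous _ _ _ (psTop p) (fun α : ℤ_[p] => τ (Multiplicative.ofAdd α))) :
    @IsCompact _ (psTop p) (Set.range fun α : ℤ_[p] => τ (Multiplicative.ofAdd α)) ∧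
    Cardinal.mk (Set.range fun α : ℤ_[p] => τ (Multiplicative.ofAdd α)) ≤ Cardinal.mk ℤ_[p] ∧
    ∀ i : ℕ, Nat.card ((Ideal.Quotient.mk
        (Ideal.span {(PowerSeries.X : PowerSeries (ZMod p)) ^ p ^ i})) ''
        (Set.range fun α : ℤ_[p] => τ (Multiplicative.ofAdd α))) = p ^ i := by
  refine ⟨@isCompact_range _ _ _ (psTop p) _ _ hτc, Cardinal.mk_range_le, fun i => ?_⟩
  have hconst (α : ℤ_[p]) : constantCoeff (τ (ofAdd α)) = 1 := congrArg Units.val <|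
    PadicInt.monoidHom_zmod_units_eq_one ((constantCoeff.toMonoidHom.comp τ).toHomUnits) α
  set φ := (Ideal.Quotient.mk (Ideal.span {(X : (ZMod p)⟦X⟧) ^ p ^ i})).toMonoidHom.comp τ
  have hφ (α : ℤ_[p]) : φ (ofAdd α) ^ p ^ i = 1 := by
    simpa [φ] using mk_pow_char_pow_eq_one p (hconst α) i
  have horder : orderOf (φ (ofAdd 1)) = p ^ i := by
    simpa [φ, hτ1] using orderOf_mk_one_sub_X (R := ZMod p) p i
  rw [← Set.range_comp]
  change Nat.card (Set.range fun α => φ (ofAdd α)) = p ^ i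
  have hfin : IsOfFinOrder (φ (ofAdd 1)) :=
    orderOf_pos_iff.1 (horder.symm ▸ pow_pos (Fact.out : p.Prime).pos i)
  rw [PadicInt.range_monoidHom_eq_powers φ hφ, SetLike.coe_sort_coe,
    Nat.card_powers_of_isOfFinOrder hfin, horder]
end

section
/- Let K be the subfield of the field of formal Laurent series (Z/p)((x)) generated by the set { (1-x)^α : α ∈ Z_p }. Then the degree [ (Z/p)((x)) : K ] of the field extension is uncountable; equivalently, (Z/p)((x)) is not a countable-dimensional K-vector space. -/
/-!
If `(ℤ/p)((x))` had countable dimension over `K`, it would be spanned by countably many power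
series `g` (as `x = (1-x)^0 - (1-x)^1 ∈ K`). Clearing denominators, every power series `f` then
satisfies a relation `b * f = ∑_{g ∈ t} a_g * g` with `t` a finite set of these `g`, `b` and the
`a_g` linear combinations of `M` series `(1-x)^γ`, and `ord b ≤ N`. Modulo `x^(p^k)` the series
`(1-x)^γ` only depends on `γ mod p^k`, so for fixed `(t, M, N)` the first `p^k - N` coefficients
of `f` are determined by `p^((k+1) M (|t|+1))` possible data, far fewer than `p^(p^k - N)` for
large `k`. Hence each of these countably many sets of `f` is nowhere dense in `(ℤ/p)^ℕ`, and the
Baire category theorem produces an `f` outside all of them.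
-/

open PowerSeries PiNat

section Cylinders

variable {E : Type*}

theorem exists_mem_cylinder_disjoint_of_card_lt [Fintype E] {C : Type*} [Fintype C]
    {S : Set (ℕ → E)} {n P : ℕ} (cls : S → C)
    (hcls : ∀ f f' : S, cls f = cls f' → ∀ i < P, (f : ℕ → E) i = (f' : ℕ → E) i)
    (hcard : Fintype.card C < Fintype.card E ^ (P - n)) (x : ℕ → E) :
    ∃ y ∈ cylinder x n, Disjoint (cylinder y P) S := by
  -- Otherwise each of the `card E ^ (P - n)` extensions of `x` from `[0, n)` to `[0, P)` meets
  -- `S`, and the classes of these witnesses are pairwise distinct.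
  by_contra! h
  let extend : (Fin (P - n) → E) → ℕ → E := fun w i =>
    if hi : n ≤ i ∧ i < P then w ⟨i - n, by omega⟩ else x i
  have hext : ∀ w, extend w ∈ cylinder x n := fun w i hi => dif_neg (by omega)
  choose z hz hzS using fun w => Set.not_disjoint_iff.mp (h _ (hext w))
  have hinj : Function.Injective fun w => cls ⟨z w, hzS w⟩ := by
    intro w w' hww'
    funext j
    have hj : n ≤ n + j ∧ n + j < P := by omega
    have : z w (n + j) = z w' (n + j) := hcls _ _ hww' (n + j) hj.2
    rw [hz w _ hj.2, hz w' _ hj.2] at this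
    simpa [extend, hj] using this
  have := Fintype.card_le_of_injective _ hinj
  simp only [Fintype.card_fun, Fintype.card_fin] at this
  omega

theorem exists_forall_notMem_of_exists_cylinder_disjoint [Finite E] [Nonempty E] {ι : Type*}
    [Countable ι] (S : ι → Set (ℕ → E))
    (hS : ∀ j x n, ∃ y ∈ cylinder x n, ∃ m, Disjoint (cylinder y m) (S j)) :
    ∃ f, ∀ j, f ∉ S j := by
  -- Baire category: each `S j` is nowhere dense in the compact space `ℕ → E`.
  let _ : TopologicalSpace E := ⊥
  have : DiscreteTopology E := ⟨rfl⟩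
  have hdense : ∀ j, Dense (closure (S j))ᶜ := by
    refine fun j => dense_iff_inter_open.mpr fun U hU ⟨x, hx⟩ => ?_
    obtain ⟨_, ⟨x', n, rfl⟩, hxv, hvU⟩ :=
      (isTopologicalBasis_cylinders _).exists_subset_of_mem_open hx hU
    rw [← mem_cylinder_iff_eq.mp hxv] at hvU
    obtain ⟨y, hy, m, hdisj⟩ := hS j x n
    exact ⟨y, hvU hy, (hdisj.closure_right (isOpen_cylinder _ y m)).notMem_of_mem_left
      (self_mem_cylinder y m)⟩
  obtain ⟨f, hf⟩ :=
    (dense_iInter_of_isOpen (fun j => isClosed_closure.isOpen_compl) hdense).nonempty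
  exact ⟨f, fun j hfj => Set.mem_iInter.mp hf j (subset_closure hfj)⟩

end Cylinders

theorem exists_add_mul_lt_pow {p : ℕ} (hp : 2 ≤ p) (a b : ℕ) :
    ∃ k, a + b * (k + 1) < p ^ k := by
  -- with `c = a + b` and `k = 2 (2c + 1)`: `c (k + 1) < (2c + 2)^2 ≤ (2^(2c+1))^2 = 2^k`
  refine ⟨2 * (2 * (a + b) + 1), ?_⟩
  have h2 : 2 * (a + b) + 2 ≤ 2 ^ (2 * (a + b) + 1) := Nat.lt_two_pow_self
  calc a + b * (2 * (2 * (a + b) + 1) + 1) < (2 ^ (2 * (a + b) + 1)) ^ 2 := by nlinarith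
    _ = 2 ^ (2 * (2 * (a + b) + 1)) := by rw [← pow_mul, mul_comm]
    _ ≤ p ^ (2 * (2 * (a + b) + 1)) := Nat.pow_le_pow_left hp _

theorem PowerSeries.X_pow_dvd_of_X_pow_dvd_mul {R : Type*} [Semiring R] [NoZeroDivisors R]
    {b h : R⟦X⟧} {Q N : ℕ} (hbh : X ^ Q ∣ b * h) (hb : ¬ X ^ (N + 1) ∣ b) :
    X ^ (Q - N) ∣ h := by
  have hQ : (Q : ℕ∞) ≤ b.order + h.order :=
    order_mul b h ▸ nat_le_order _ _ (X_pow_dvd_iff.mp hbh)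
  have hN : b.order ≤ N := by
    by_contra! hlt
    refine hb (X_pow_dvd_iff.mpr fun i hi => coeff_of_lt_order i ?_)
    exact lt_of_le_of_lt (by exact_mod_cast Nat.lt_succ_iff.mp hi) hlt
  refine X_pow_dvd_iff.mpr fun i hi => coeff_of_lt_order i ?_
  by_contra! hle
  have := hQ.trans (add_le_add hN hle)
  norm_cast at this
  omega

theorem dvd_mul_sub_of_dvd_sub {A ι : Type*} [CommRing A] {q b b' h h' : A} {t : Finset ι}
    {a a' G : ι → A} (hb : q ∣ b - b') (ha : ∀ i ∈ t, q ∣ a i - a' i)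
    (e : b * h = ∑ i ∈ t, a i * G i) (e' : b' * h' = ∑ i ∈ t, a' i * G i) :
    q ∣ b * (h - h') := by
  have : b * (h - h') = ∑ i ∈ t, (a i - a' i) * G i - (b - b') * h' := by
    simp only [sub_mul, Finset.sum_sub_distrib, ← e, ← e']
    ring
  rw [this]
  exact dvd_sub (Finset.dvd_sum fun i hi => (ha i hi).mul_right _) (hb.mul_right _)

section BoundedSpan

variable (R : Type*) {A G : Type*} [Semiring R] [AddCommMonoid A] [Module R A]

def boundedSpan (T : G → A) (M : ℕ) : Set A :=
  {a | ∃ (c : Fin M → R) (γ : Fin M → G), ∑ u, c u • T (γ u) = a}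

variable {R} {T : G → A}

theorem boundedSpan_mono [Nonempty G] : Monotone (boundedSpan R T) :=
  monotone_nat_of_le_succ fun _ _ ⟨c, γ, ha⟩ =>
    ⟨Fin.cons 0 c, Fin.cons (Classical.arbitrary G) γ, by simp [Fin.sum_univ_succ, ha]⟩

theorem exists_mem_boundedSpan_of_mem_span {a : A} (ha : a ∈ Submodule.span R (Set.range T)) :
    ∃ M, a ∈ boundedSpan R T M := by
  obtain ⟨M, c, g, rfl⟩ := Submodule.mem_span_set'.mp ha
  choose γ hγ using fun u => (g u).2
  exact ⟨M, c, γ, by simp [hγ]⟩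

end BoundedSpan

theorem subring_closure_range_subset_span {R A G : Type*} [CommRing R] [Ring A] [Algebra R A]
    [Monoid G] (τ : G →* A) :
    (Subring.closure (Set.range τ) : Set A) ⊆ Submodule.span R (Set.range τ) := by
  intro a ha
  have : a ∈ Algebra.adjoin R (Set.range τ) :=
    Subring.closure_le (t := (Algebra.adjoin R (Set.range τ)).toSubring).mpr
      Algebra.subset_adjoin ha
  rwa [← Subalgebra.mem_toSubmodule, Algebra.adjoin_eq_span, ← MonoidHom.coe_mrange,
    Submonoid.closure_eq] at this

theorem exists_mul_eq_of_mem_subfieldClosure {A L : Type*} [CommRing A] [Nontrivial A] [Field L]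
    {φ : A →+* L} (hφ : Function.Injective φ) {s : Set A} {κ : L}
    (hκ : κ ∈ Subfield.closure (φ '' s)) :
    ∃ a ∈ Subring.closure s, ∃ b ∈ Subring.closure s, b ≠ 0 ∧ κ * φ b = φ a := by
  obtain ⟨_, hy, _, hz, rfl⟩ := Subfield.mem_closure_iff.mp hκ
  rw [← RingHom.map_closure] at hy hz
  obtain ⟨a, ha, rfl⟩ := hy
  obtain ⟨b, hb, rfl⟩ := hz
  by_cases hb0 : b = 0
  · exact ⟨0, zero_mem _, 1, one_mem _, one_ne_zero, by simp [hb0]⟩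
  · exact ⟨a, ha, b, hb, hb0, div_mul_cancel₀ _ ((map_ne_zero_iff φ hφ).mpr hb0)⟩

theorem exists_mul_eq_sum_of_mem_span {A L : Type*} [CommRing A] [IsDomain A] [Field L]
    {φ : A →+* L} (hφ : Function.Injective φ) {s V : Set A} {h : A}
    (hh : φ h ∈ Submodule.span (Subfield.closure (φ '' s)) (φ '' V)) :
    ∃ t : Finset A, ↑t ⊆ V ∧ ∃ b ∈ Subring.closure s, b ≠ 0 ∧ ∃ a : A → A,
      (∀ g ∈ t, a g ∈ Subring.closure s) ∧ b * h = ∑ g ∈ t, a g * g := by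
  classical
  obtain ⟨l, hlV, hl⟩ := (Finsupp.mem_span_image_iff_linearCombination _).mp hh
  choose num hnum den hden hden0 hmul using
    fun g => exists_mul_eq_of_mem_subfieldClosure hφ (l g).2
  refine ⟨l.support, hlV, ∏ g ∈ l.support, den g, prod_mem fun g _ => hden g,
    Finset.prod_ne_zero_iff.mpr fun g _ => hden0 g,
    fun g => num g * ∏ g' ∈ l.support.erase g, den g',
    fun g _ => mul_mem (hnum g) (prod_mem fun g' _ => hden g'), hφ ?_⟩
  rw [Finsupp.linearCombination_apply, Finsupp.sum] at hl
  rw [map_mul, ← hl, Finset.mul_sum, map_sum]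
  refine Finset.sum_congr rfl fun g hg => ?_
  rw [← Finset.mul_prod_erase _ _ hg, Subfield.smul_def, smul_eq_mul]
  simp only [map_mul, ← hmul]
  ring

theorem exists_countable_span_eq_top_of_rank_le_aleph0 {K V : Type*} [DivisionRing K]
    [AddCommGroup V] [Module K V] (h : Module.rank K V ≤ Cardinal.aleph0) :
    ∃ s : Set V, s.Countable ∧ Submodule.span K s = ⊤ := by
  let b := Module.Basis.ofVectorSpace K V
  have : Countable (Module.Basis.ofVectorSpaceIndex K V) :=
    Cardinal.mk_le_aleph0_iff.mp (b.mk_eq_rank''.trans_le h)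
  exact ⟨_, Set.countable_range b, b.span_eq⟩

theorem span_powerSeriesPart_eq_top {F : Type*} [Field F] {K : Subfield (LaurentSeries F)}
    (hX : HahnSeries.single 1 1 ∈ K) {s : Set (LaurentSeries F)} (hs : Submodule.span K s = ⊤) :
    Submodule.span K
      (HahnSeries.ofPowerSeries ℤ F '' (LaurentSeries.powerSeriesPart '' s)) = ⊤ := by
  refine eq_top_iff.mpr (hs ▸ Submodule.span_le.mpr fun e he => ?_)
  rw [SetLike.mem_coe, ← e.single_order_mul_powerSeriesPart, RatFunc.single_zpow]
  have hpart : HahnSeries.ofPowerSeries ℤ F e.powerSeriesPart ∈ Submodule.span K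
      (HahnSeries.ofPowerSeries ℤ F '' (LaurentSeries.powerSeriesPart '' s)) :=
    Submodule.subset_span ⟨_, ⟨e, he, rfl⟩, rfl⟩
  exact Submodule.smul_of_tower_mem _ (⟨_, zpow_mem hX e.order⟩ : K) hpart

section Padic

variable {p : ℕ} [Fact p.Prime] {T : ℤ_[p] → (ZMod p)⟦X⟧}

theorem X_pow_dvd_sub_of_appr_eq (hT : ∀ γ k, X ^ p ^ k ∣ T γ - (1 - X) ^ γ.appr k)
    {γ γ' : ℤ_[p]} {k : ℕ} (h : γ.appr k = γ'.appr k) : X ^ p ^ k ∣ T γ - T γ' := by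
  simpa [h] using (hT γ k).sub (hT γ' k)

theorem exists_code_boundedSpan (hT : ∀ γ k, X ^ p ^ k ∣ T γ - (1 - X) ^ γ.appr k)
    (M k : ℕ) :
    ∃ code : boundedSpan (ZMod p) T M → Fin M → ZMod p × Fin (p ^ k),
      ∀ a a', code a = code a' → X ^ p ^ k ∣ (a : (ZMod p)⟦X⟧) - (a' : (ZMod p)⟦X⟧) := by
  choose c γ hcγ using fun a : boundedSpan (ZMod p) T M => a.2
  refine ⟨fun a u => (c a u, ⟨(γ a u).appr k, PadicInt.appr_lt _ _⟩), fun a a' h => ?_⟩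
  rw [← hcγ a, ← hcγ a', ← Finset.sum_sub_distrib]
  refine Finset.dvd_sum fun u _ => ?_
  obtain ⟨hc, hγ⟩ := Prod.mk.inj (congrFun h u)
  rw [hc, ← smul_sub, smul_eq_C_mul]
  exact (X_pow_dvd_sub_of_appr_eq hT (Fin.mk.inj_iff.mp hγ)).mul_left _

variable (T) in
def relationSet (t : Finset (ZMod p)⟦X⟧) (M N : ℕ) : Set (ℕ → ZMod p) :=
  {f | ∃ b ∈ boundedSpan (ZMod p) T M, ¬ X ^ (N + 1) ∣ b ∧ ∃ a : (ZMod p)⟦X⟧ → (ZMod p)⟦X⟧,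
    (∀ g ∈ t, a g ∈ boundedSpan (ZMod p) T M) ∧ b * mk f = ∑ g ∈ t, a g * g}

theorem exists_mem_cylinder_disjoint_relationSet
    (hT : ∀ γ k, X ^ p ^ k ∣ T γ - (1 - X) ^ γ.appr k) (t : Finset (ZMod p)⟦X⟧) (M N : ℕ)
    (x : ℕ → ZMod p) (n : ℕ) :
    ∃ y ∈ cylinder x n, ∃ m, Disjoint (cylinder y m) (relationSet T t M N) := by
  classical
  obtain ⟨k, hk⟩ :=
    exists_add_mul_lt_pow (Fact.out : p.Prime).two_le (n + N) (M * (t.card + 1))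
  obtain ⟨code, hcode⟩ := exists_code_boundedSpan hT M k
  choose b hb hbN a ha hrel using fun f : relationSet T t M N => f.2
  let cls (f : relationSet T t M N) :=
    (code ⟨b f, hb f⟩, fun g : t => code ⟨a f g, ha f g g.2⟩)
  have hcls : ∀ f f', cls f = cls f' →
      ∀ i < p ^ k - N, (f : ℕ → ZMod p) i = (f' : ℕ → ZMod p) i := by
    intro f f' hff' i hi
    obtain ⟨hcb, hca⟩ := Prod.mk.inj hff'
    have hdvd : X ^ p ^ k ∣ b f * (mk f - mk f') :=
      dvd_mul_sub_of_dvd_sub (a := a f) (a' := a f') (G := id) (hcode _ _ hcb)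
        (fun g hg => hcode ⟨a f g, _⟩ ⟨a f' g, _⟩ (congrFun hca ⟨g, hg⟩)) (hrel f) (hrel f')
    simpa [sub_eq_zero] using
      X_pow_dvd_iff.mp (X_pow_dvd_of_X_pow_dvd_mul hdvd (hbN f)) i hi
  have hcard :
      Fintype.card ((Fin M → ZMod p × Fin (p ^ k)) × (t → Fin M → ZMod p × Fin (p ^ k))) <
        Fintype.card (ZMod p) ^ (p ^ k - N - n) := by
    simp only [Fintype.card_prod, Fintype.card_fun, Fintype.card_fin, ZMod.card,
      Fintype.card_coe]
    calc _ = p ^ (M * (t.card + 1) * (k + 1)) := by ring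
      _ < p ^ (p ^ k - N - n) := Nat.pow_lt_pow_right (Fact.out : p.Prime).one_lt (by omega)
  obtain ⟨y, hy, hdisj⟩ := exists_mem_cylinder_disjoint_of_card_lt cls hcls hcard x
  exact ⟨y, hy, _, hdisj⟩

local notation "φ" => HahnSeries.ofPowerSeries ℤ (ZMod p)

theorem exists_mem_relationSet (τ : Multiplicative ℤ_[p] →* (ZMod p)⟦X⟧)
    {V : Set (ZMod p)⟦X⟧} {f : ℕ → ZMod p}
    (hf : φ (mk f) ∈ Submodule.span
      (Subfield.closure (Set.range fun α : ℤ_[p] => φ (τ (Multiplicative.ofAdd α)))) (φ '' V)) :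
    ∃ t : Finset (ZMod p)⟦X⟧, ↑t ⊆ V ∧
      ∃ M N, f ∈ relationSet (fun α => τ (Multiplicative.ofAdd α)) t M N := by
  have hrange : Set.range (fun α : ℤ_[p] => τ (Multiplicative.ofAdd α)) = Set.range τ :=
    Multiplicative.ofAdd.surjective.range_comp τ
  rw [show (Set.range fun α : ℤ_[p] => φ (τ (Multiplicative.ofAdd α))) = φ '' Set.range τ by
    rw [← hrange, ← Set.range_comp]; rfl] at hf
  obtain ⟨t, htV, b, hb, hb0, a, ha, hrel⟩ :=
    exists_mul_eq_sum_of_mem_span HahnSeries.ofPowerSeries_injective hf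
  have hbounded : ∀ r ∈ Subring.closure (Set.range τ),
      ∃ M, r ∈ boundedSpan (ZMod p) (fun α => τ (Multiplicative.ofAdd α)) M := fun r hr =>
    exists_mem_boundedSpan_of_mem_span (hrange ▸ subring_closure_range_subset_span τ hr)
  obtain ⟨Mb, hMb⟩ := hbounded b hb
  choose! Ma hMa using fun g hg => hbounded (a g) (ha g hg)
  obtain ⟨N, hN⟩ := exists_coeff_ne_zero_iff_ne_zero.mpr hb0
  refine ⟨t, htV, Mb ⊔ t.sup Ma, N, b, boundedSpan_mono le_sup_left hMb,
    fun hX => hN (X_pow_dvd_iff.mp hX N N.lt_succ_self), a, fun g hg =>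
      boundedSpan_mono (le_sup_of_le_right (Finset.le_sup hg)) (hMa g hg), hrel⟩

theorem single_one_one_mem_closure (τ : Multiplicative ℤ_[p] →* (ZMod p)⟦X⟧)
    (hτ1 : τ (Multiplicative.ofAdd 1) = 1 - X) :
    HahnSeries.single 1 1 ∈
      Subfield.closure (Set.range fun α : ℤ_[p] => φ (τ (Multiplicative.ofAdd α))) := by
  have : HahnSeries.single (1 : ℤ) (1 : ZMod p) =
      φ (τ (Multiplicative.ofAdd 0)) - φ (τ (Multiplicative.ofAdd 1)) := by
    rw [hτ1, ofAdd_zero, map_one τ, ← map_sub, sub_sub_cancel, HahnSeries.ofPowerSeries_X]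
  rw [this]
  exact sub_mem (Subfield.subset_closure ⟨0, rfl⟩) (Subfield.subset_closure ⟨1, rfl⟩)

end Padic

/-- Let `K` be the subfield of the field of Laurent series `(ℤ/p)((x))` generated by
`{(1-x)^α : α ∈ ℤ_p}` (where `α ↦ (1-x)^α` is the continuous extension of `n ↦ (1-x)^n`,
characterized by `(1-x)^α ≡ (1-x)^(α mod pⁱ) mod (x^(pⁱ))`).  Then the degree
`[(ℤ/p)((x)) : K]` is uncountable, i.e. `(ℤ/p)((x))` is not a countable-dimensional
`K`-vector space. -/
theorem stmt3 (p : ℕ) [Fact p.Prime]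
    (τ : Multiplicative ℤ_[p] →* PowerSeries (ZMod p))
    (hτ1 : τ (Multiplicative.ofAdd (1 : ℤ_[p])) = 1 - PowerSeries.X)
    (hτ2 : ∀ (α : ℤ_[p]) (i : ℕ),
      τ (Multiplicative.ofAdd α) - (1 - PowerSeries.X) ^ (α.appr i) ∈
        Ideal.span {(PowerSeries.X : PowerSeries (ZMod p)) ^ p ^ i}) :
    Cardinal.aleph0 < Module.rank
      (Subfield.closure (Set.range fun α : ℤ_[p] =>
        (HahnSeries.ofPowerSeries ℤ (ZMod p)) (τ (Multiplicative.ofAdd α))))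
      (LaurentSeries (ZMod p)) := by
  classical
  by_contra! hrank
  obtain ⟨s, hs, hspan⟩ := exists_countable_span_eq_top_of_rank_le_aleph0 hrank
  set V := LaurentSeries.powerSeriesPart '' s
  have : Countable V := (hs.image _).to_subtype
  have hspanV := span_powerSeriesPart_eq_top (single_one_one_mem_closure τ hτ1) hspan
  obtain ⟨f, hf⟩ := exists_forall_notMem_of_exists_cylinder_disjoint
    (fun j : Finset V × ℕ × ℕ => relationSet (fun α => τ (Multiplicative.ofAdd α))
      (j.1.map (Function.Embedding.subtype _)) j.2.1 j.2.2)
    fun j => exists_mem_cylinder_disjoint_relationSet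
      (fun α k => Ideal.mem_span_singleton.mp (hτ2 α k)) _ _ _
  obtain ⟨t, htV, M, N, hfMN⟩ := exists_mem_relationSet τ (f := f) (hspanV ▸ Submodule.mem_top)
  refine hf (t.subtype (· ∈ V), M, N) ?_
  rwa [Finset.subtype_map_of_mem htV]
end

section
/- Let K be the subfield of (Z/p)((x)) generated by { (1-x)^α : α ∈ Z_p } and let R = K ∩ (Z/p)[[x]]. Then the multiplication map (Z/p)[[x]] ⊗_R K → (Z/p)((x)) is an isomorphism of (Z/p)[[x]]-modules. -/
open scoped TensorProduct

/-!
Since `1 - x ∈ K` and `K` is a field, `K` contains `x` and `x⁻¹`; hence `K` is the localization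
`R[1/x]` of `R = K ∩ (ℤ/p)[[x]]`, while `(ℤ/p)((x)) = (ℤ/p)[[x]][1/x]`. Base change of a
localization is a localization: `(ℤ/p)[[x]] ⊗_R R[1/x] ≅ (ℤ/p)[[x]][1/x]`, via `a ⊗ b ↦ ab`.
-/

theorem Algebra.TensorProduct.productMap_bijective_of_isLocalization
    {R A B L : Type*} [CommSemiring R] [CommSemiring A] [CommSemiring B] [CommSemiring L]
    [Algebra R A] [Algebra R B] [Algebra R L] [Algebra A L] [IsScalarTower R A L]
    (S : Submonoid R) [IsLocalization S B] [IsLocalization (Algebra.algebraMapSubmonoid A S) L]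
    (g : B →ₐ[R] L) :
    Function.Bijective (Algebra.TensorProduct.productMap (IsScalarTower.toAlgHom R A L) g) := by
  let := g.toAlgebra
  have : IsScalarTower R B L := IsScalarTower.of_algebraMap_eq fun r => (g.commutes r).symm
  have := Algebra.isPushout_of_isLocalization S B A L
  convert (Algebra.IsPushout.equiv R A B L).bijective
  ext t
  induction t using TensorProduct.induction_on with
  | zero => simp
  | tmul a b => simp [Algebra.IsPushout.equiv_tmul, RingHom.algebraMap_toAlgebra]
  | add t₁ t₂ h₁ h₂ => simp [h₁, h₂]

namespace Subring

variable {A L : Type*} [CommRing A] [CommRing L] [Algebra A L] (K : Subring L)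

abbrev comapAlgebra : Algebra (K.comap (algebraMap A L)) K :=
  (((algebraMap A L).comp (K.comap (algebraMap A L)).subtype).codRestrict K fun r => r.2).toAlgebra

attribute [local instance] comapAlgebra

theorem isLocalization_away_comap (x : A) [IsLocalization.Away x L] (hx : algebraMap A L x ∈ K)
    (hx' : IsLocalization.Away.invSelf x ∈ K) :
    IsLocalization.Away (⟨x, hx⟩ : K.comap (algebraMap A L)) K := by
  refine .mk _ ?_ (fun k => ?_) (fun a b hab => ?_)
  · exact IsUnit.of_mul_eq_one (⟨_, hx'⟩ : K) (Subtype.ext (IsLocalization.Away.mul_invSelf x))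
  · obtain ⟨n, a, ha⟩ := IsLocalization.Away.surj x (k : L)
    have haK : algebraMap A L a ∈ K := ha ▸ K.mul_mem k.2 (K.pow_mem hx n)
    exact ⟨n, ⟨a, haK⟩, Subtype.ext ha⟩
  · obtain ⟨n, hn⟩ := IsLocalization.Away.exists_of_eq (S := L) x
      (congrArg Subtype.val hab : algebraMap A L a = algebraMap A L b)
    exact ⟨n, Subtype.ext (by simpa using hn)⟩

end Subring

theorem stmt4_general (p : ℕ) [Fact p.Prime]
    (τ : Multiplicative ℤ_[p] →* PowerSeries (ZMod p))
    (hτ1 : τ (Multiplicative.ofAdd (1 : ℤ_[p])) = 1 - PowerSeries.X) :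
    ∀ (K : Subfield (LaurentSeries (ZMod p))),
      K = Subfield.closure (Set.range fun α : ℤ_[p] =>
        (HahnSeries.ofPowerSeries ℤ (ZMod p)) (τ (Multiplicative.ofAdd α))) →
      letI R : Subring (PowerSeries (ZMod p)) :=
        K.toSubring.comap (HahnSeries.ofPowerSeries ℤ (ZMod p))
      letI : Algebra R (PowerSeries (ZMod p)) := R.subtype.toAlgebra
      letI : Algebra R (LaurentSeries (ZMod p)) :=
        ((HahnSeries.ofPowerSeries ℤ (ZMod p)).comp R.subtype).toAlgebra
      letI : Algebra R K.toSubring :=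
        (((HahnSeries.ofPowerSeries ℤ (ZMod p)).comp R.subtype).codRestrict K.toSubring
          (fun x => x.2)).toAlgebra
      Function.Bijective
        (Algebra.TensorProduct.productMap
          ({ toRingHom := HahnSeries.ofPowerSeries ℤ (ZMod p), commutes' := fun r => rfl } :
            PowerSeries (ZMod p) →ₐ[R] LaurentSeries (ZMod p))
          ({ toRingHom := K.toSubring.subtype, commutes' := fun r => rfl } :
            K.toSubring →ₐ[R] LaurentSeries (ZMod p))) := by
  intro K hK
  let R : Subring (PowerSeries (ZMod p)) := K.toSubring.comap (HahnSeries.ofPowerSeries ℤ (ZMod p))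
  let : Algebra R (PowerSeries (ZMod p)) := R.subtype.toAlgebra
  let : Algebra R (LaurentSeries (ZMod p)) :=
    ((HahnSeries.ofPowerSeries ℤ (ZMod p)).comp R.subtype).toAlgebra
  let : Algebra R K.toSubring :=
    (((HahnSeries.ofPowerSeries ℤ (ZMod p)).comp R.subtype).codRestrict K.toSubring
      (fun x => x.2)).toAlgebra
  have hX : algebraMap (PowerSeries (ZMod p)) (LaurentSeries (ZMod p)) PowerSeries.X ∈ K := by
    have h : HahnSeries.ofPowerSeries ℤ (ZMod p) (1 - PowerSeries.X) ∈ K :=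
      hK ▸ hτ1 ▸ Subfield.subset_closure ⟨1, rfl⟩
    simpa using K.sub_mem K.one_mem h
  have hXinv : IsLocalization.Away.invSelf
      (S := LaurentSeries (ZMod p)) (PowerSeries.X : PowerSeries (ZMod p)) ∈ K := by
    rw [eq_inv_of_mul_eq_one_right
      (IsLocalization.Away.mul_invSelf (S := LaurentSeries (ZMod p)) PowerSeries.X)]
    exact K.inv_mem hX
  have := K.toSubring.isLocalization_away_comap _ hX hXinv
  have : IsScalarTower R (PowerSeries (ZMod p)) (LaurentSeries (ZMod p)) :=
    IsScalarTower.of_algebraMap_eq fun _ => rfl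
  have : IsLocalization (Algebra.algebraMapSubmonoid (PowerSeries (ZMod p))
      (Submonoid.powers (⟨PowerSeries.X, hX⟩ : R))) (LaurentSeries (ZMod p)) := by
    rw [Algebra.algebraMapSubmonoid_powers]
    exact LaurentSeries.of_powerSeries_localization
  exact Algebra.TensorProduct.productMap_bijective_of_isLocalization
    (Submonoid.powers (⟨PowerSeries.X, hX⟩ : R)) _

/-- Let `K ⊆ (ℤ/p)((x))` be the subfield generated by `{(1-x)^α : α ∈ ℤ_p}` and
`R = K ∩ (ℤ/p)[[x]]` (realized as the preimage of `K` under the inclusion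
`(ℤ/p)[[x]] ↪ (ℤ/p)((x))`).  Then the multiplication map `(ℤ/p)[[x]] ⊗_R K → (ℤ/p)((x))`,
`a ⊗ b ↦ ab`, is an isomorphism (formalized: it is bijective; it is in particular
`(ℤ/p)[[x]]`-linear). -/
theorem stmt4 (p : ℕ) [Fact p.Prime]
    (τ : Multiplicative ℤ_[p] →* PowerSeries (ZMod p))
    (hτ1 : τ (Multiplicative.ofAdd (1 : ℤ_[p])) = 1 - PowerSeries.X)
    (hτ2 : ∀ (α : ℤ_[p]) (i : ℕ),
      τ (Multiplicative.ofAdd α) - (1 - PowerSeries.X) ^ (α.appr i) ∈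
        Ideal.span {(PowerSeries.X : PowerSeries (ZMod p)) ^ p ^ i}) :
    ∀ (K : Subfield (LaurentSeries (ZMod p))),
      K = Subfield.closure (Set.range fun α : ℤ_[p] =>
        (HahnSeries.ofPowerSeries ℤ (ZMod p)) (τ (Multiplicative.ofAdd α))) →
      letI R : Subring (PowerSeries (ZMod p)) :=
        K.toSubring.comap (HahnSeries.ofPowerSeries ℤ (ZMod p))
      letI : Algebra R (PowerSeries (ZMod p)) := R.subtype.toAlgebra
      letI : Algebra R (LaurentSeries (ZMod p)) :=
        ((HahnSeries.ofPowerSeries ℤ (ZMod p)).comp R.subtype).toAlgebra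
      letI : Algebra R K.toSubring :=
        (((HahnSeries.ofPowerSeries ℤ (ZMod p)).comp R.subtype).codRestrict K.toSubring
          (fun x => x.2)).toAlgebra
      Function.Bijective
        (Algebra.TensorProduct.productMap
          ({ toRingHom := HahnSeries.ofPowerSeries ℤ (ZMod p), commutes' := fun r => rfl } :
            PowerSeries (ZMod p) →ₐ[R] LaurentSeries (ZMod p))
          ({ toRingHom := K.toSubring.subtype, commutes' := fun r => rfl } :
            K.toSubring →ₐ[R] LaurentSeries (ZMod p))) :=
  stmt4_general p τ hτ1
end

section
/- (mod-p Hopf formula) Let G be a group and H a normal subgroup of G. Then there is a natural exact sequence H₂(G, Z/p) → H₂(G/H, Z/p) → (H ∩ [G,G]G^p)/([H,G]H^p) → 0, where [G,G]G^p denotes the subgroup generated by commutators and p-th powers of G, and [H,G]H^p the subgroup generated by commutators [h,g] (h ∈ H, g ∈ G) and p-th powers of elements of H. -/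
open scoped TensorProduct
open scoped commutatorElement

/-! Second group homology with trivial coefficients in a commutative ring `k`, defined
concretely via the bar complex: `H₂(G,k) = ker d₂ / im d₃` (realized as the image of the
2-cycles in `C₂/im d₃`), where `d₂(g₁,g₂) = (g₂) - (g₁g₂) + (g₁)` and
`d₃(g₁,g₂,g₃) = (g₂,g₃) - (g₁g₂,g₃) + (g₁,g₂g₃) - (g₁,g₂)`. -/

/-- The bar differential `d₂ : k[G²] → k[G]` for trivial coefficients. -/
noncomputable def barD2 (k G : Type) [CommRing k] [Monoid G] :
    ((G × G) →₀ k) →ₗ[k] (G →₀ k) :=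
  Finsupp.lift (G →₀ k) k (G × G) fun g =>
    Finsupp.single g.2 1 - Finsupp.single (g.1 * g.2) 1 + Finsupp.single g.1 1

/-- The bar differential `d₃ : k[G³] → k[G²]` for trivial coefficients. -/
noncomputable def barD3 (k G : Type) [CommRing k] [Monoid G] :
    ((G × G × G) →₀ k) →ₗ[k] ((G × G) →₀ k) :=
  Finsupp.lift ((G × G) →₀ k) k (G × G × G) fun g =>
    Finsupp.single (g.2.1, g.2.2) 1 - Finsupp.single (g.1 * g.2.1, g.2.2) 1
      + Finsupp.single (g.1, g.2.1 * g.2.2) 1 - Finsupp.single (g.1, g.2.1) 1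

/-- The 2-cycles. -/
noncomputable def barZ2 (k G : Type) [CommRing k] [Monoid G] : Submodule k ((G × G) →₀ k) :=
  LinearMap.ker (barD2 k G)

/-- Second group homology `H₂(G,k)` with trivial coefficients: the image of the 2-cycles in
`C₂/(im d₃)`, i.e. `ker d₂ / im d₃`. -/
noncomputable def GH2 (k G : Type) [CommRing k] [Monoid G] : Type :=
  Submodule.map (LinearMap.range (barD3 k G)).mkQ (barZ2 k G)

noncomputable instance (k G : Type) [CommRing k] [Monoid G] : AddCommGroup (GH2 k G) :=
  inferInstanceAs (AddCommGroup (Submodule.map (LinearMap.range (barD3 k G)).mkQ (barZ2 k G)))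

noncomputable instance (k G : Type) [CommRing k] [Monoid G] : Module k (GH2 k G) :=
  inferInstanceAs (Module k (Submodule.map (LinearMap.range (barD3 k G)).mkQ (barZ2 k G)))

/-!
Fix a set-theoretic section `s` of `π : G → G/H` and write `g = s(π g) · f(g)` with `f(g) ∈ H`.
Conjugation by `G` acts trivially on `H̄ = H/[H,G]Hᵖ`, so there
`f(g₁g₂) = c(π g₁, π g₂) + f(g₁) + f(g₂)` for the factor set `c(x, y) = s(x)s(y)s(xy)⁻¹`.
Read on chains, `c ∘ π = -f ∘ d₂`; as chains of `G/H` lift along `π` and `d₂ ∘ d₃ = 0`, this gives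
`c ∘ d₃ = 0`, so `c` induces `δ : H₂(G/H) → H̄`, which vanishes on the image of `H₂(G)`.

Write `(g)` for the basis chain of `g` and `[h]` for the class of `h` in `H̄`. On 1-chains killed
by `π`, `f` is inverted modulo `d₂(ker π)` by `[h] ↦ (h) - (1)`. So if `δ(w) = 0`, the boundary
of the lift `s(w)` is the boundary of a 2-chain killed by `π`, and subtracting that chain from
`s(w)` gives a cycle of `G` over `w`. If instead `δ(w) = [h]`, then `(h) ∈ im d₂`, which means
`h ∈ [G,G]Gᵖ`; conversely `h ∈ H ∩ [G,G]Gᵖ` is `δ((1,1) - π z)` for any `z` with `d₂ z = (h)`.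
Thus `coker(H₂(G) → H₂(G/H)) ≅ im δ ≅ (H ∩ [G,G]Gᵖ)/([H,G]Hᵖ)`.
-/

section BarComplex

variable (k : Type) [CommRing k]

section Maps

variable {G K : Type}

noncomputable abbrev barMap₁ (f : G → K) : (G →₀ k) →ₗ[k] (K →₀ k) :=
  Finsupp.lmapDomain k k f

noncomputable abbrev barMap₂ (f : G → K) : ((G × G) →₀ k) →ₗ[k] ((K × K) →₀ k) :=
  Finsupp.lmapDomain k k (Prod.map f f)

noncomputable abbrev barMap₃ (f : G → K) : ((G × G × G) →₀ k) →ₗ[k] ((K × K × K) →₀ k) :=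
  Finsupp.lmapDomain k k (Prod.map f (Prod.map f f))

lemma barMap₂_comp_barMap₂ {f : G → K} {s : K → G} (hs : f.LeftInverse s) :
    barMap₂ k f ∘ₗ barMap₂ k s = LinearMap.id := by
  ext ⟨x, y⟩
  simp [hs x, hs y]

lemma barMap₃_comp_barMap₃ {f : G → K} {s : K → G} (hs : f.LeftInverse s) :
    barMap₃ k f ∘ₗ barMap₃ k s = LinearMap.id := by
  ext ⟨x, y, z⟩
  simp [hs x, hs y, hs z]

end Maps

variable {G K : Type} [Monoid G] [Monoid K]

@[simp]
lemma barD2_single (g h : G) (a : k) :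
    barD2 k G (Finsupp.single (g, h) a) =
      Finsupp.single h a - Finsupp.single (g * h) a + Finsupp.single g a := by
  simp [barD2, Finsupp.lift_apply, Finsupp.sum_single_index, smul_sub, Finsupp.smul_single]

@[simp]
lemma barD3_single (g h l : G) (a : k) :
    barD3 k G (Finsupp.single (g, h, l) a) =
      Finsupp.single (h, l) a - Finsupp.single (g * h, l) a + Finsupp.single (g, h * l) a
        - Finsupp.single (g, h) a := by
  simp [barD3, Finsupp.lift_apply, Finsupp.sum_single_index, smul_sub, Finsupp.smul_single]

lemma barD2_barD3 (x : (G × G × G) →₀ k) : barD2 k G (barD3 k G x) = 0 := by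
  induction x using Finsupp.induction_linear with
  | zero => simp
  | add x y hx hy => simp only [map_add, hx, hy, add_zero]
  | single ghl a =>
    obtain ⟨g, h, l⟩ := ghl
    simp [mul_assoc]
    abel

lemma barD2_barMap₂ (f : G →* K) (z : (G × G) →₀ k) :
    barD2 k K (barMap₂ k f z) = barMap₁ k f (barD2 k G z) := by
  induction z using Finsupp.induction_linear with
  | zero => simp
  | add x y hx hy => simp only [map_add, hx, hy]
  | single gh a =>
    obtain ⟨g, h⟩ := gh
    simp [Finsupp.mapDomain_sub, Finsupp.mapDomain_add]

lemma barD3_barMap₃ (f : G →* K) (x : (G × G × G) →₀ k) :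
    barD3 k K (barMap₃ k f x) = barMap₂ k f (barD3 k G x) := by
  induction x using Finsupp.induction_linear with
  | zero => simp
  | add x y hx hy => simp only [map_add, hx, hy]
  | single ghl a =>
    obtain ⟨g, h, l⟩ := ghl
    simp [Finsupp.mapDomain_sub, Finsupp.mapDomain_add]

lemma barMap₂_mem_barZ2 (f : G →* K) {z : (G × G) →₀ k} (hz : z ∈ barZ2 k G) :
    barMap₂ k f z ∈ barZ2 k K := by
  rw [barZ2, LinearMap.mem_ker, barD2_barMap₂, LinearMap.mem_ker.mp hz, map_zero]

namespace GH2

variable {k}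

noncomputable def mk (z : (G × G) →₀ k) (hz : z ∈ barZ2 k G) : GH2 k G :=
  ⟨(LinearMap.range (barD3 k G)).mkQ z, z, hz, rfl⟩

lemma exists_eq_mk (X : GH2 k G) : ∃ z hz, X = mk z hz := by
  obtain ⟨_, z, hz, rfl⟩ := X
  exact ⟨z, hz, rfl⟩

noncomputable def lift {M : Type} [AddCommGroup M] [Module k M]
    (σ : ((G × G) →₀ k) →ₗ[k] M) (hσ : σ ∘ₗ barD3 k G = 0) : GH2 k G →ₗ[k] M :=
  (LinearMap.range (barD3 k G)).liftQ σ (LinearMap.range_le_ker_iff.mpr hσ) ∘ₗ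
    Submodule.subtype _

@[simp]
lemma lift_mk {M : Type} [AddCommGroup M] [Module k M]
    (σ : ((G × G) →₀ k) →ₗ[k] M) (hσ : σ ∘ₗ barD3 k G = 0) (z : (G × G) →₀ k)
    (hz : z ∈ barZ2 k G) : lift σ hσ (mk z hz) = σ z :=
  rfl

noncomputable def map (f : G →* K) : GH2 k G →ₗ[k] GH2 k K :=
  LinearMap.restrict
    (Submodule.mapQ _ _ (barMap₂ k f) (by
      rintro _ ⟨v, rfl⟩
      exact ⟨barMap₃ k f v, barD3_barMap₃ k f v⟩))
    (by
      rintro _ ⟨z, hz, rfl⟩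
      exact ⟨_, barMap₂_mem_barZ2 k f hz, rfl⟩)

lemma map_mk (f : G →* K) (z : (G × G) →₀ k) (hz : z ∈ barZ2 k G) :
    map f (mk z hz) = mk (barMap₂ k f z) (barMap₂_mem_barZ2 k f hz) :=
  rfl

end GH2

end BarComplex

section ElementaryAbelianQuotients

variable {Γ : Type*} [Group Γ]

lemma Subgroup.normal_of_commutator_le {N : Subgroup Γ} (h : _root_.commutator Γ ≤ N) :
    N.Normal :=
  ⟨fun n hn g => by
    have hc : ⁅g, n⁆ ∈ N :=
      h (Subgroup.commutator_mem_commutator (Subgroup.mem_top g) (Subgroup.mem_top n))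
    simpa [commutatorElement_def] using N.mul_mem hc hn⟩

abbrev QuotientGroup.commGroupOfCommutatorLE (N : Subgroup Γ) [N.Normal]
    (h : commutator Γ ≤ N) : CommGroup (Γ ⧸ N) :=
  { mul_comm := (Subgroup.Normal.quotient_commutative_iff_commutator_le.mpr h).is_comm.comm }

lemma QuotientGroup.pow_eq_one_of_forall_pow_mem {N : Subgroup Γ} [N.Normal] {n : ℕ}
    (h : ∀ a : Γ, a ^ n ∈ N) (x : Γ ⧸ N) : x ^ n = 1 := by
  induction x using QuotientGroup.induction_on with
  | H a => rw [← QuotientGroup.mk_pow, QuotientGroup.eq_one_iff]; exact h a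

abbrev Additive.zmodModule {A : Type*} [CommGroup A] {n : ℕ} (h : ∀ a : A, a ^ n = 1) :
    Module (ZMod n) (Additive A) :=
  AddCommGroup.zmodModule fun x => by rw [← ofMul_toMul x, ← ofMul_pow, h, ofMul_one]

lemma Multiplicative.pow_char_eq_one {M : Type*} [AddCommGroup M] {n : ℕ} [Module (ZMod n) M]
    (a : Multiplicative M) : a ^ n = 1 := by
  rw [← ofAdd_toAdd a, ← ofAdd_nsmul, ZModModule.char_nsmul_eq_zero, ofAdd_zero]

end ElementaryAbelianQuotients

section CommPow

variable (p : ℕ)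

def commPowSubgroup (G : Type*) [Group G] : Subgroup G :=
  ⁅(⊤ : Subgroup G), (⊤ : Subgroup G)⁆ ⊔ Subgroup.closure {x : G | ∃ g : G, x = g ^ p}

variable {G : Type*} [Group G]

def relCommPowSubgroup (H : Subgroup G) : Subgroup G :=
  Subgroup.normalClosure ({x : G | ∃ h ∈ H, ∃ g : G, x = ⁅h, g⁆} ∪ {x : G | ∃ h ∈ H, x = h ^ p})

variable {p}

lemma pow_mem_commPowSubgroup (g : G) : g ^ p ∈ commPowSubgroup p G :=
  Subgroup.mem_sup_right (Subgroup.subset_closure ⟨g, rfl⟩)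

lemma commutator_le_commPowSubgroup : commutator G ≤ commPowSubgroup p G :=
  le_sup_left

instance : (commPowSubgroup p G).Normal :=
  Subgroup.normal_of_commutator_le commutator_le_commPowSubgroup

lemma commPowSubgroup_le_ker {A : Type*} [CommGroup A] (f : G →* A) (hA : ∀ a : A, a ^ p = 1) :
    commPowSubgroup p G ≤ f.ker := by
  refine sup_le ?_ ((Subgroup.closure_le _).mpr ?_)
  · exact Abelianization.commutator_subset_ker f
  · rintro _ ⟨g, rfl⟩
    simp [hA]

noncomputable instance : CommGroup (G ⧸ commPowSubgroup p G) :=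
  QuotientGroup.commGroupOfCommutatorLE _ commutator_le_commPowSubgroup

noncomputable instance : Module (ZMod p) (Additive (G ⧸ commPowSubgroup p G)) :=
  Additive.zmodModule (QuotientGroup.pow_eq_one_of_forall_pow_mem pow_mem_commPowSubgroup)

variable {H : Subgroup G}

instance : (relCommPowSubgroup p H).Normal :=
  Subgroup.normalClosure_normal

lemma commutator_mem_relCommPowSubgroup {h : G} (hh : h ∈ H) (g : G) :
    ⁅h, g⁆ ∈ relCommPowSubgroup p H :=
  Subgroup.subset_normalClosure (Or.inl ⟨h, hh, g, rfl⟩)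

lemma pow_mem_relCommPowSubgroup {h : G} (hh : h ∈ H) : h ^ p ∈ relCommPowSubgroup p H :=
  Subgroup.subset_normalClosure (Or.inr ⟨h, hh, rfl⟩)

end CommPow

section FirstHomology

variable {p : ℕ} {G : Type} [Group G]

lemma mk_single_mul_mod_range_barD2 (a b : G) :
    (Submodule.Quotient.mk (Finsupp.single (a * b) (1 : ZMod p)) :
        (G →₀ ZMod p) ⧸ LinearMap.range (barD2 (ZMod p) G)) =
      Submodule.Quotient.mk (Finsupp.single a 1) + Submodule.Quotient.mk (Finsupp.single b 1) := by
  rw [← Submodule.Quotient.mk_add, Submodule.Quotient.eq]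
  exact ⟨-Finsupp.single (a, b) 1, by simp only [map_neg, barD2_single]; abel⟩

lemma single_one_mem_range_barD2_iff {g : G} :
    Finsupp.single g (1 : ZMod p) ∈ LinearMap.range (barD2 (ZMod p) G) ↔
      g ∈ commPowSubgroup p G := by
  constructor
  · rintro ⟨z, hz⟩
    let toQuot : (G →₀ ZMod p) →ₗ[ZMod p] Additive (G ⧸ commPowSubgroup p G) :=
      Finsupp.linearCombination _ fun g => Additive.ofMul (g : G ⧸ commPowSubgroup p G)
    have hquot : toQuot ∘ₗ barD2 (ZMod p) G = 0 := by
      refine Finsupp.lhom_ext fun ⟨a, b⟩ c => ?_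
      simp [toQuot, ofMul_mul]
    have hg := LinearMap.congr_fun hquot z
    rw [LinearMap.comp_apply, hz] at hg
    simpa [toQuot] using hg
  · intro hg
    let e : G →* Multiplicative ((G →₀ ZMod p) ⧸ LinearMap.range (barD2 (ZMod p) G)) :=
      MonoidHom.mk' (fun g => .ofAdd (Submodule.Quotient.mk (Finsupp.single g 1)))
        fun a b => by rw [mk_single_mul_mod_range_barD2]; rfl
    have he : e g = 1 := commPowSubgroup_le_ker e Multiplicative.pow_char_eq_one hg
    exact (Submodule.Quotient.mk_eq_zero _).mp (congrArg Multiplicative.toAdd he)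

end FirstHomology

section RelCommPowQuotient

variable (p : ℕ) {G : Type*} [Group G] (H : Subgroup G)

abbrev relCommPowQuotient : Type _ :=
  Additive (H ⧸ (relCommPowSubgroup p H).subgroupOf H)

lemma commutator_le_relCommPowSubgroup_subgroupOf :
    _root_.commutator H ≤ (relCommPowSubgroup p H).subgroupOf H := by
  rw [commutator_def, Subgroup.commutator_le]
  intro a _ b _
  rw [Subgroup.mem_subgroupOf]
  exact commutator_mem_relCommPowSubgroup a.2 (b : G)

noncomputable instance : CommGroup (H ⧸ (relCommPowSubgroup p H).subgroupOf H) :=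
  QuotientGroup.commGroupOfCommutatorLE _ (commutator_le_relCommPowSubgroup_subgroupOf p H)

noncomputable instance : Module (ZMod p) (relCommPowQuotient p H) :=
  Additive.zmodModule (QuotientGroup.pow_eq_one_of_forall_pow_mem fun h => by
    simpa [Subgroup.mem_subgroupOf] using pow_mem_relCommPowSubgroup (p := p) h.2)

def relCommPowQuotient.mk (h : H) : relCommPowQuotient p H :=
  Additive.ofMul (h : H ⧸ (relCommPowSubgroup p H).subgroupOf H)

noncomputable def commPowClass :
    ↥(H ⊓ commPowSubgroup p G) →* H ⧸ (relCommPowSubgroup p H).subgroupOf H :=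
  (QuotientGroup.mk' _).comp (Subgroup.inclusion inf_le_left)

lemma ker_commPowClass : (commPowClass p H).ker =
    (relCommPowSubgroup p H).subgroupOf (H ⊓ commPowSubgroup p G) := by
  ext x
  simp [commPowClass, Subgroup.mem_subgroupOf]

variable {p H}

lemma relCommPowQuotient.mk_mul (a b : H) :
    relCommPowQuotient.mk p H (a * b) = relCommPowQuotient.mk p H a + relCommPowQuotient.mk p H b :=
  rfl

lemma relCommPowQuotient.mk_surjective : Function.Surjective (relCommPowQuotient.mk p H) :=
  fun x => QuotientGroup.mk_surjective x.toMul

variable [H.Normal]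

lemma relCommPowQuotient.mk_conjNormal (g : G) (h : H) :
    relCommPowQuotient.mk p H (MulAut.conjNormal g h) = relCommPowQuotient.mk p H h := by
  refine congrArg Additive.ofMul (QuotientGroup.eq.mpr ?_)
  rw [Subgroup.mem_subgroupOf]
  have : ⁅(h : G)⁻¹, g⁆⁻¹ = ((MulAut.conjNormal g h)⁻¹ * h : H) := by
    simp [commutatorElement_def, mul_assoc]
  rw [← this]
  exact inv_mem (commutator_mem_relCommPowSubgroup (inv_mem h.2) g)

lemma relCommPowSubgroup_subgroupOf_le_ker {A : Type*} [CommGroup A] (f : H →* A)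
    (hconj : ∀ (g : G) (h : H), f (MulAut.conjNormal g h) = f h) (hA : ∀ a : A, a ^ p = 1) :
    (relCommPowSubgroup p H).subgroupOf H ≤ f.ker := by
  let K : Subgroup G := f.ker.map H.subtype
  have hK : K.Normal := ⟨by
    rintro _ ⟨h, hh, rfl⟩ g
    exact ⟨MulAut.conjNormal g h, by rwa [SetLike.mem_coe, MonoidHom.mem_ker, hconj], rfl⟩⟩
  have hLK : relCommPowSubgroup p H ≤ K := by
    refine Subgroup.normalClosure_le_normal ?_
    rintro _ (⟨h, hh, g, rfl⟩ | ⟨h, hh, rfl⟩)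
    · refine ⟨⟨h, hh⟩ * MulAut.conjNormal g ⟨h, hh⟩⁻¹, ?_, ?_⟩
      · simp [hconj]
      · simp [commutatorElement_def, mul_assoc]
    · exact ⟨⟨h, hh⟩ ^ p, by rw [SetLike.mem_coe, MonoidHom.mem_ker, map_pow, hA], rfl⟩
  intro h hh
  obtain ⟨h', hh', he⟩ := hLK hh
  rwa [Subtype.ext he] at hh'

end RelCommPowQuotient

section FactorSet

variable (p : ℕ) {G : Type} [Group G] (H : Subgroup G) [H.Normal]

lemma QuotientGroup.mk'_leftInverse_out :
    Function.LeftInverse (QuotientGroup.mk' H) Quotient.out :=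
  QuotientGroup.out_eq'

noncomputable def factorSet (x y : G ⧸ H) : H :=
  ⟨x.out * y.out * (x * y).out⁻¹, by rw [← QuotientGroup.eq_one_iff]; simp⟩

noncomputable def fiberCoord (g : G) : H :=
  ⟨(g : G ⧸ H).out⁻¹ * g, by rw [← QuotientGroup.eq_one_iff]; simp⟩

lemma out_mul_fiberCoord (g : G) : (g : G ⧸ H).out * fiberCoord H g = g := by
  simp [fiberCoord]

lemma fiberCoord_mul (g₁ g₂ : G) :
    fiberCoord H (g₁ * g₂) =
      MulAut.conjNormal ((g₁ : G ⧸ H) * g₂).out⁻¹ (factorSet H g₁ g₂) *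
        MulAut.conjNormal (g₂ : G ⧸ H).out⁻¹ (fiberCoord H g₁) * fiberCoord H g₂ := by
  ext
  simp [fiberCoord, factorSet, mul_assoc]

lemma factorSet_one_one_mul_fiberCoord (h : H) : factorSet H 1 1 * fiberCoord H h = h := by
  ext
  simp [fiberCoord, factorSet, (QuotientGroup.eq_one_iff _).mpr h.2]

noncomputable def factorSetCochain :
    (((G ⧸ H) × (G ⧸ H)) →₀ ZMod p) →ₗ[ZMod p] relCommPowQuotient p H :=
  Finsupp.linearCombination _ fun xy => relCommPowQuotient.mk p H (factorSet H xy.1 xy.2)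

noncomputable def fiberCoordCochain : (G →₀ ZMod p) →ₗ[ZMod p] relCommPowQuotient p H :=
  Finsupp.linearCombination _ fun g => relCommPowQuotient.mk p H (fiberCoord H g)

lemma factorSetCochain_barMap₂ (z : (G × G) →₀ ZMod p) :
    factorSetCochain p H (barMap₂ (ZMod p) (QuotientGroup.mk' H) z) =
      -fiberCoordCochain p H (barD2 (ZMod p) G z) := by
  induction z using Finsupp.induction_linear with
  | zero => simp
  | add x y hx hy => simp only [map_add, hx, hy, neg_add]
  | single gg c =>
    obtain ⟨g₁, g₂⟩ := gg
    simp only [barD2_single, map_add, map_sub, Finsupp.lmapDomain_apply,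
      Finsupp.mapDomain_single, Prod.map_apply, QuotientGroup.mk'_apply, fiberCoordCochain,
      factorSetCochain, Finsupp.linearCombination_single, fiberCoord_mul,
      relCommPowQuotient.mk_mul, relCommPowQuotient.mk_conjNormal]
    module

lemma factorSetCochain_comp_barD3 :
    factorSetCochain p H ∘ₗ barD3 (ZMod p) (G ⧸ H) = 0 := by
  refine LinearMap.ext fun x => ?_
  obtain ⟨y, rfl⟩ : ∃ y, barMap₃ (ZMod p) (QuotientGroup.mk' H) y = x :=
    ⟨barMap₃ _ Quotient.out x, LinearMap.congr_fun
      (barMap₃_comp_barMap₃ _ (QuotientGroup.mk'_leftInverse_out H)) x⟩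
  rw [LinearMap.comp_apply, barD3_barMap₃, factorSetCochain_barMap₂, barD2_barD3, map_zero,
    neg_zero, LinearMap.zero_apply]

end FactorSet

section KerBoundaries

variable (p : ℕ) {G : Type} [Group G] (H : Subgroup G) [H.Normal]

noncomputable def kerBoundaries : Submodule (ZMod p) (G →₀ ZMod p) :=
  (LinearMap.ker (barMap₂ (ZMod p) (QuotientGroup.mk' H))).map (barD2 (ZMod p) G)

variable {p H}

lemma mk_single_mul_mod_kerBoundaries (a : G) {h : G} (hh : h ∈ H) :
    (Submodule.Quotient.mk (Finsupp.single (a * h) (1 : ZMod p)) :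
        (G →₀ ZMod p) ⧸ kerBoundaries p H) + Submodule.Quotient.mk (Finsupp.single 1 1) =
      Submodule.Quotient.mk (Finsupp.single a 1) + Submodule.Quotient.mk (Finsupp.single h 1) := by
  rw [← Submodule.Quotient.mk_add, ← Submodule.Quotient.mk_add, Submodule.Quotient.eq]
  refine ⟨Finsupp.single (a, 1) 1 - Finsupp.single (a, h) 1, ?_, ?_⟩
  · simp [Finsupp.mapDomain_sub, (QuotientGroup.eq_one_iff h).mpr hh]
  · simp only [map_sub, barD2_single, mul_one]
    abel

lemma mk_single_conj_mod_kerBoundaries (g : G) {a : G} (ha : a ∈ H) :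
    (Submodule.Quotient.mk (Finsupp.single (g * a * g⁻¹) (1 : ZMod p)) :
        (G →₀ ZMod p) ⧸ kerBoundaries p H) = Submodule.Quotient.mk (Finsupp.single a 1) := by
  rw [Submodule.Quotient.eq]
  refine ⟨Finsupp.single (g * a * g⁻¹, g) 1 - Finsupp.single (1, g) 1 + Finsupp.single (g, 1) 1
    - Finsupp.single (g, a) 1, ?_, ?_⟩
  · simp [Finsupp.mapDomain_sub, Finsupp.mapDomain_add, (QuotientGroup.eq_one_iff a).mpr ha,
      (QuotientGroup.eq_one_iff _).mpr (Subgroup.Normal.conj_mem ‹_› a ha g)]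
  · simp only [map_sub, map_add, barD2_single, mul_one, one_mul, inv_mul_cancel_right]
    abel

variable (p H)

noncomputable def chainClassHom : H →* Multiplicative ((G →₀ ZMod p) ⧸ kerBoundaries p H) :=
  MonoidHom.mk'
    (fun h => .ofAdd (Submodule.Quotient.mk (Finsupp.single (h : G) 1) -
      Submodule.Quotient.mk (Finsupp.single 1 1)))
    fun a b => by
      rw [← ofAdd_add, Subgroup.coe_mul, eq_sub_iff_add_eq.mpr
        (mk_single_mul_mod_kerBoundaries (a : G) b.2)]
      abel_nf

lemma chainClassHom_conjNormal (g : G) (h : H) :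
    chainClassHom p H (MulAut.conjNormal g h) = chainClassHom p H h := by
  simp only [chainClassHom, MonoidHom.mk'_apply, MulAut.conjNormal_apply,
    mk_single_conj_mod_kerBoundaries g h.2]

noncomputable def chainClass :
    relCommPowQuotient p H →ₗ[ZMod p] (G →₀ ZMod p) ⧸ kerBoundaries p H :=
  (MonoidHom.toAdditiveLeft <| QuotientGroup.lift _ (chainClassHom p H) <|
    relCommPowSubgroup_subgroupOf_le_ker _ (chainClassHom_conjNormal p H)
      Multiplicative.pow_char_eq_one).toZModLinearMap p

lemma chainClass_mk (h : H) :
    chainClass p H (relCommPowQuotient.mk p H h) =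
      Submodule.Quotient.mk (Finsupp.single (h : G) 1) -
        Submodule.Quotient.mk (Finsupp.single 1 1) :=
  rfl

end KerBoundaries

section Lifting

variable {p : ℕ} {G : Type} [Group G] {H : Subgroup G} [H.Normal]

lemma mk_sub_out_eq_chainClass (u : G →₀ ZMod p) :
    (Submodule.Quotient.mk (u - barMap₁ (ZMod p) Quotient.out
        (barMap₁ (ZMod p) (QuotientGroup.mk' H) u)) : (G →₀ ZMod p) ⧸ kerBoundaries p H) =
      chainClass p H (fiberCoordCochain p H u) := by
  induction u using Finsupp.induction_linear with
  | zero => simp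
  | add x y hx hy =>
    simp only [map_add, add_sub_add_comm, Submodule.Quotient.mk_add, hx, hy]
  | single g c =>
    have key := mk_single_mul_mod_kerBoundaries (p := p) (g : G ⧸ H).out (fiberCoord H g).2
    rw [out_mul_fiberCoord] at key
    simp only [Finsupp.lmapDomain_apply, Finsupp.mapDomain_single, QuotientGroup.mk'_apply,
      fiberCoordCochain, Finsupp.linearCombination_single, map_smul, chainClass_mk,
      Submodule.Quotient.mk_sub, ← Finsupp.smul_single_one g c, Submodule.Quotient.mk_smul,
      one_smul]
    linear_combination (norm := module) c • key

lemma barMap₂_mk'_out (w : ((G ⧸ H) × (G ⧸ H)) →₀ ZMod p) :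
    barMap₂ (ZMod p) (QuotientGroup.mk' H) (barMap₂ (ZMod p) Quotient.out w) = w :=
  LinearMap.congr_fun (barMap₂_comp_barMap₂ _ (QuotientGroup.mk'_leftInverse_out H)) w

lemma mk_barD2_out {w : ((G ⧸ H) × (G ⧸ H)) →₀ ZMod p} (hw : w ∈ barZ2 (ZMod p) (G ⧸ H)) :
    (Submodule.Quotient.mk (barD2 (ZMod p) G (barMap₂ (ZMod p) Quotient.out w)) :
        (G →₀ ZMod p) ⧸ kerBoundaries p H) = -chainClass p H (factorSetCochain p H w) := by
  set u := barD2 (ZMod p) G (barMap₂ (ZMod p) Quotient.out w)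
  have hπ : barMap₁ (ZMod p) (QuotientGroup.mk' H) u = 0 := by
    rw [← barD2_barMap₂, barMap₂_mk'_out]
    exact hw
  have hρ : fiberCoordCochain p H u = -factorSetCochain p H w := by
    rw [← barMap₂_mk'_out w, factorSetCochain_barMap₂, neg_neg]
  simpa only [hπ, hρ, map_zero, sub_zero, map_neg] using mk_sub_out_eq_chainClass (H := H) u

lemma exists_barZ2_barMap₂_eq {w : ((G ⧸ H) × (G ⧸ H)) →₀ ZMod p}
    (hw : w ∈ barZ2 (ZMod p) (G ⧸ H)) (hσ : factorSetCochain p H w = 0) :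
    ∃ z ∈ barZ2 (ZMod p) G, barMap₂ (ZMod p) (QuotientGroup.mk' H) z = w := by
  have hB := mk_barD2_out (H := H) hw
  rw [hσ, map_zero, neg_zero, Submodule.Quotient.mk_eq_zero] at hB
  obtain ⟨y, hy, hdy⟩ := hB
  refine ⟨barMap₂ (ZMod p) Quotient.out w - y, ?_, ?_⟩
  · simp [barZ2, hdy]
  · rw [map_sub, barMap₂_mk'_out, LinearMap.mem_ker.mp hy, sub_zero]

lemma mem_commPowSubgroup_of_factorSetCochain_eq {w : ((G ⧸ H) × (G ⧸ H)) →₀ ZMod p}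
    (hw : w ∈ barZ2 (ZMod p) (G ⧸ H)) {h : H}
    (hσ : factorSetCochain p H w = relCommPowQuotient.mk p H h) :
    (h : G) ∈ commPowSubgroup p G := by
  have hB := mk_barD2_out hw
  rw [hσ, chainClass_mk, neg_sub, eq_sub_iff_add_eq, ← Submodule.Quotient.mk_add,
    Submodule.Quotient.eq] at hB
  have hR := LinearMap.map_le_range hB
  rw [← single_one_mem_range_barD2_iff]
  have h1 : Finsupp.single (1 : G) (1 : ZMod p) ∈ LinearMap.range (barD2 (ZMod p) G) :=
    ⟨Finsupp.single (1, 1) 1, by simp⟩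
  have h2 := LinearMap.mem_range_self (barD2 (ZMod p) G) (barMap₂ (ZMod p) Quotient.out w)
  convert Submodule.add_mem _ (Submodule.sub_mem _ hR h2) h1 using 1
  abel

lemma exists_factorSetCochain_eq {h : H} (hh : (h : G) ∈ commPowSubgroup p G) :
    ∃ w ∈ barZ2 (ZMod p) (G ⧸ H), factorSetCochain p H w = relCommPowQuotient.mk p H h := by
  obtain ⟨z, hz⟩ := single_one_mem_range_barD2_iff.mpr hh
  have hπh : ((h : G) : G ⧸ H) = 1 := (QuotientGroup.eq_one_iff _).mpr h.2
  refine ⟨Finsupp.single (1, 1) 1 - barMap₂ (ZMod p) (QuotientGroup.mk' H) z, ?_, ?_⟩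
  · rw [barZ2, LinearMap.mem_ker, map_sub, barD2_barMap₂, hz]
    simp [hπh]
  · rw [map_sub, factorSetCochain_barMap₂, hz, sub_neg_eq_add]
    simp [factorSetCochain, fiberCoordCochain, ← relCommPowQuotient.mk_mul,
      factorSet_one_one_mul_fiberCoord]

end Lifting

section HopfFormula

variable (p : ℕ) {G : Type} [Group G] (H : Subgroup G) [H.Normal]

noncomputable def connectingMap : GH2 (ZMod p) (G ⧸ H) →ₗ[ZMod p] relCommPowQuotient p H :=
  GH2.lift (factorSetCochain p H) (factorSetCochain_comp_barD3 p H)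

lemma ker_connectingMap :
    LinearMap.ker (connectingMap p H) = LinearMap.range (GH2.map (QuotientGroup.mk' H)) := by
  apply le_antisymm
  · intro X hX
    obtain ⟨w, hw, rfl⟩ := GH2.exists_eq_mk X
    obtain ⟨z, hz, rfl⟩ := exists_barZ2_barMap₂_eq hw hX
    exact ⟨GH2.mk z hz, rfl⟩
  · rintro _ ⟨X, rfl⟩
    obtain ⟨z, hz, rfl⟩ := GH2.exists_eq_mk X
    rw [LinearMap.mem_ker, GH2.map_mk, connectingMap, GH2.lift_mk, factorSetCochain_barMap₂,
      LinearMap.mem_ker.mp hz, map_zero, neg_zero]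

variable {p H}

lemma mem_range_connectingMap_iff (x : relCommPowQuotient p H) :
    x ∈ LinearMap.range (connectingMap p H) ↔ x.toMul ∈ (commPowClass p H).range := by
  constructor
  · rintro ⟨X, rfl⟩
    obtain ⟨w, hw, rfl⟩ := GH2.exists_eq_mk X
    obtain ⟨h, hh⟩ := relCommPowQuotient.mk_surjective (factorSetCochain p H w)
    exact ⟨⟨h, h.2, mem_commPowSubgroup_of_factorSetCochain_eq hw hh.symm⟩,
      congrArg Additive.toMul hh⟩
  · rintro ⟨y, hy⟩
    obtain ⟨w, hw, hσ⟩ := exists_factorSetCochain_eq (h := Subgroup.inclusion inf_le_left y)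
      (Subgroup.mem_inf.mp y.2).2
    exact ⟨GH2.mk w hw, hσ.trans (congrArg Additive.ofMul hy)⟩

variable (p H)

def rangeConnectingMapEquiv :
    LinearMap.range (connectingMap p H) ≃+ Additive (commPowClass p H).range where
  toFun x := .ofMul ⟨x.1.toMul, (mem_range_connectingMap_iff x.1).mp x.2⟩
  invFun y := ⟨.ofMul y.toMul.1, (mem_range_connectingMap_iff _).mpr y.toMul.2⟩
  left_inv _ := rfl
  right_inv _ := rfl
  map_add' _ _ := rfl

noncomputable def cokernelEquiv :
    (GH2 (ZMod p) (G ⧸ H) ⧸ LinearMap.range (GH2.map (k := ZMod p) (QuotientGroup.mk' H))) ≃+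
      Additive (↥(H ⊓ commPowSubgroup p G) ⧸
        (relCommPowSubgroup p H).subgroupOf (H ⊓ commPowSubgroup p G)) :=
  ((Submodule.quotEquivOfEq _ _ (ker_connectingMap p H).symm).trans
      (connectingMap p H).quotKerEquivRange).toAddEquiv.trans <|
    (rangeConnectingMapEquiv p H).trans <| MulEquiv.toAdditive <|
      (QuotientGroup.quotientKerEquivRange _).symm.trans
        (QuotientGroup.quotientMulEquivOfEq (ker_commPowClass p H))

end HopfFormula

theorem stmt7_general (p : ℕ) (G : Type) [Group G] (H : Subgroup G) [H.Normal] :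
    ∃ ψ : GH2 (ZMod p) G →ₗ[ZMod p] GH2 (ZMod p) (G ⧸ H),
      (∀ (z : (G × G) →₀ ZMod p) (hz : z ∈ barZ2 (ZMod p) G)
         (w : ((G ⧸ H) × (G ⧸ H)) →₀ ZMod p) (hw : w ∈ barZ2 (ZMod p) (G ⧸ H)),
         Finsupp.mapDomain (Prod.map (QuotientGroup.mk' H) (QuotientGroup.mk' H)) z = w →
         ψ ⟨(LinearMap.range (barD3 (ZMod p) G)).mkQ z, z, hz, rfl⟩ =
           ⟨(LinearMap.range (barD3 (ZMod p) (G ⧸ H))).mkQ w, w, hw, rfl⟩) ∧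
      Nonempty ((GH2 (ZMod p) (G ⧸ H) ⧸ LinearMap.range ψ) ≃+
        Additive ((H ⊓ (⁅(⊤ : Subgroup G), (⊤ : Subgroup G)⁆ ⊔
            Subgroup.closure {x : G | ∃ g : G, x = g ^ p}) : Subgroup G) ⧸
          (Subgroup.normalClosure
            ({x : G | ∃ h ∈ H, ∃ g : G, x = ⁅h, g⁆} ∪
             {x : G | ∃ h ∈ H, x = h ^ p})).subgroupOf
            (H ⊓ (⁅(⊤ : Subgroup G), (⊤ : Subgroup G)⁆ ⊔
              Subgroup.closure {x : G | ∃ g : G, x = g ^ p})))) := by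
  refine ⟨GH2.map (QuotientGroup.mk' H), ?_, ⟨cokernelEquiv p H⟩⟩
  rintro z hz w hw rfl
  exact GH2.map_mk _ z hz

/-- mod-`p` Hopf formula: for a group `G` with normal subgroup `H` there is an exact sequence
`H₂(G,ℤ/p) → H₂(G/H,ℤ/p) → (H ∩ [G,G]Gᵖ)/([H,G]Hᵖ) → 0`, where the first map is induced by
the projection `G → G/H`.  Exactness is expressed by: the cokernel of the induced map `ψ` is
isomorphic (as an abelian group) to `(H ∩ [G,G]Gᵖ)/([H,G]Hᵖ)`. -/
theorem stmt7 (p : ℕ) (hp : p.Prime) (G : Type) [Group G] (H : Subgroup G) [H.Normal] :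
    ∃ ψ : GH2 (ZMod p) G →ₗ[ZMod p] GH2 (ZMod p) (G ⧸ H),
      (∀ (z : (G × G) →₀ ZMod p) (hz : z ∈ barZ2 (ZMod p) G)
         (w : ((G ⧸ H) × (G ⧸ H)) →₀ ZMod p) (hw : w ∈ barZ2 (ZMod p) (G ⧸ H)),
         Finsupp.mapDomain (Prod.map (QuotientGroup.mk' H) (QuotientGroup.mk' H)) z = w →
         ψ ⟨(LinearMap.range (barD3 (ZMod p) G)).mkQ z, z, hz, rfl⟩ =
           ⟨(LinearMap.range (barD3 (ZMod p) (G ⧸ H))).mkQ w, w, hw, rfl⟩) ∧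
      Nonempty ((GH2 (ZMod p) (G ⧸ H) ⧸ LinearMap.range ψ) ≃+
        Additive ((H ⊓ (⁅(⊤ : Subgroup G), (⊤ : Subgroup G)⁆ ⊔
            Subgroup.closure {x : G | ∃ g : G, x = g ^ p}) : Subgroup G) ⧸
          (Subgroup.normalClosure
            ({x : G | ∃ h ∈ H, ∃ g : G, x = ⁅h, g⁆} ∪
             {x : G | ∃ h ∈ H, x = h ^ p})).subgroupOf
            (H ⊓ (⁅(⊤ : Subgroup G), (⊤ : Subgroup G)⁆ ⊔
              Subgroup.closure {x : G | ∃ g : G, x = g ^ p})))) :=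
  stmt7_general p G H
end
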